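/- Let X be a normed space, C ⊆ X a nonempty bounded convex subset with diameter d_C > 0, T : C → C nonexpansive, Φ : C → C a ρ-contraction, and {α_n}_{n≥0} a decreasing sequence in (0,1) such that lim α_n = 0 with rate of convergence φ and ∑ α_n diverges with rate of divergence θ. Then for every x_0 ∈ C the iteration x_{n+1} = T(α_n Φ(x_n) + (1 − α_n)x_n) satisfies lim ‖x_n − Tx_n‖ = 0 and, for all ε ∈ (0,2), ‖x_n − Tx_n‖ < ε for all n ≥ Ψ, where Ψ = max{ 1 + θ(⌈1/(1 − ρ)⌉ · (φ(ε/(4P)) + 2 + ⌈ln(4d_C/ε)⌉)), 1 + φ(ε/(2P)) } and P = (2 + ρ)d_C. -/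

import Mathlib

/-!
Write `s n = ‖x (n + 1) - x n‖` and `d` for the diameter of `C`. Nonexpansiveness of `T` and the
contraction property of `Φ` give `s (n + 1) ≤ (1 - (1 - ρ) α (n + 1)) s n + (α n - α (n + 1)) d`,
which unrolls from any `N ≤ n` to `s n ≤ exp (-(1 - ρ) ∑_{N < k ≤ n} α k) d + (α N - α n) d`.
Since `‖x n - T (x n)‖ ≤ s n + α n d`, the rate of divergence `θ` makes the exponential small
and the rate of convergence `φ` makes `α N d` small.
-/

open Filter Finset

theorem le_prod_mul_add_of_le_mul_add {s a b : ℕ → ℝ} (ha₀ : ∀ k, 0 ≤ a k) (ha₁ : ∀ k, a k ≤ 1)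
    (hb : Antitone b) (hs : ∀ n, s (n + 1) ≤ a (n + 1) * s n + (b n - b (n + 1)))
    {N m : ℕ} (hNm : N ≤ m) :
    s m ≤ (∏ k ∈ Ioc N m, a k) * s N + (b N - b m) := by
  induction m, hNm using Nat.le_induction with
  | base => simp
  | succ m hNm ih =>
    have hbNm : 0 ≤ b N - b m := sub_nonneg.mpr (hb hNm)
    rw [prod_Ioc_succ_top hNm]
    calc s (m + 1) ≤ a (m + 1) * s m + (b m - b (m + 1)) := hs m
      _ ≤ a (m + 1) * ((∏ k ∈ Ioc N m, a k) * s N + (b N - b m)) + (b m - b (m + 1)) := by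
          gcongr; exact ha₀ _
      _ ≤ (∏ k ∈ Ioc N m, a k) * a (m + 1) * s N + (b N - b (m + 1)) := by
          nlinarith [mul_le_of_le_one_left hbNm (ha₁ (m + 1))]

theorem prod_one_sub_le_exp_neg_sum {ι : Type*} (s : Finset ι) {c : ι → ℝ}
    (hc : ∀ i ∈ s, c i ≤ 1) : ∏ i ∈ s, (1 - c i) ≤ Real.exp (-∑ i ∈ s, c i) := by
  rw [← sum_neg_distrib, Real.exp_sum]
  exact prod_le_prod (fun i hi => sub_nonneg.mpr (hc i hi)) fun i _ => Real.one_sub_le_exp_neg _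

theorem Real.exp_neg_natCeil_log_le {y : ℝ} (hy : 0 < y) : Real.exp (-⌈Real.log y⌉₊) ≤ y⁻¹ := by
  rw [← Real.exp_log (inv_pos.mpr hy), Real.log_inv]
  exact Real.exp_le_exp.mpr (neg_le_neg (Nat.le_ceil _))

theorem sum_range_succ_le_add_sum_Ioc {α : ℕ → ℝ} (hα₀ : ∀ i, 0 ≤ α i) (hα₁ : ∀ i, α i ≤ 1)
    (N n : ℕ) : ∑ i ∈ range (n + 1), α i ≤ (N + 1) + ∑ i ∈ Ioc N n, α i := by
  have hdisj : Disjoint (range (N + 1)) (Ioc N n) := by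
    simp only [disjoint_left, mem_range, mem_Ioc]; omega
  calc ∑ i ∈ range (n + 1), α i ≤ ∑ i ∈ range (N + 1) ∪ Ioc N n, α i :=
        sum_le_sum_of_subset_of_nonneg
          (by intro i; simp only [mem_union, mem_range, mem_Ioc]; omega) fun i _ _ => hα₀ i
    _ = ∑ i ∈ range (N + 1), α i + ∑ i ∈ Ioc N n, α i := sum_union hdisj
    _ ≤ (N + 1) + ∑ i ∈ Ioc N n, α i := by
        gcongr
        simpa using sum_le_card_nsmul (range (N + 1)) α 1 fun i _ => hα₁ i

theorem lt_and_natCast_le_mul_sum_Ioc_of_rate {α : ℕ → ℝ} (hα₀ : ∀ i, 0 ≤ α i)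
    (hα₁ : ∀ i, α i ≤ 1) {θ : ℕ → ℕ} (hθ : ∀ n : ℕ, (n : ℝ) ≤ ∑ i ∈ range (θ n + 1), α i)
    {κ : ℝ} (hκ : 0 < κ) (N K : ℕ) {n : ℕ} (hn : θ (⌈1 / κ⌉₊ * (N + 2 + K)) ≤ n) :
    N < n ∧ (K : ℝ) ≤ κ * ∑ i ∈ Ioc N n, α i := by
  set c := ⌈1 / κ⌉₊
  have hc : 1 ≤ κ * c := by
    have := Nat.le_ceil (1 / κ)
    rwa [div_le_iff₀' hκ] at this
  have hc₁ : 1 ≤ c := Nat.one_le_ceil_iff.mpr (by positivity)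
  have hθ_le : c * (N + 2 + K) ≤ θ (c * (N + 2 + K)) + 1 := by
    have := (hθ (c * (N + 2 + K))).trans
      (by simpa using sum_le_card_nsmul (range (θ (c * (N + 2 + K)) + 1)) α 1 fun i _ => hα₁ i)
    exact_mod_cast this
  refine ⟨by nlinarith, ?_⟩
  have hsum : ((c * (N + 2 + K) : ℕ) : ℝ) ≤ (N + 1) + ∑ i ∈ Ioc N n, α i :=
    (hθ _).trans <| (sum_le_sum_of_subset_of_nonneg (range_subset_range.mpr (by omega))
      fun i _ _ => hα₀ i).trans (sum_range_succ_le_add_sum_Ioc hα₀ hα₁ N n)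
  push_cast at hsum
  have hcK : (c : ℝ) * K ≤ ∑ i ∈ Ioc N n, α i := by
    have : (1 : ℝ) ≤ c := by exact_mod_cast hc₁
    nlinarith [mul_le_mul_of_nonneg_right this (by positivity : (0 : ℝ) ≤ N + 2)]
  calc (K : ℝ) ≤ κ * c * K := le_mul_of_one_le_left K.cast_nonneg hc
    _ ≤ κ * ∑ i ∈ Ioc N n, α i := by rw [mul_assoc]; gcongr

section Iteration

variable {X : Type*} [NormedAddCommGroup X] [NormedSpace ℝ X] {C : Set X} {T Φ : X → X}
  {ρ d : ℝ} {α : ℕ → ℝ} {x : ℕ → X}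

theorem norm_iterate_succ_sub_le (hconv : Convex ℝ C) (hd : ∀ a ∈ C, ∀ b ∈ C, ‖a - b‖ ≤ d)
    (hΦ : ∀ x ∈ C, Φ x ∈ C) (hTne : ∀ x ∈ C, ∀ y ∈ C, ‖T x - T y‖ ≤ ‖x - y‖)
    (hΦc : ∀ x ∈ C, ∀ y ∈ C, ‖Φ x - Φ y‖ ≤ ρ * ‖x - y‖) (hα : ∀ n, α n ∈ Set.Ioo (0 : ℝ) 1)
    (hdec : Antitone α) (hxC : ∀ n, x n ∈ C)
    (hrec : ∀ n, x (n + 1) = T (α n • Φ (x n) + (1 - α n) • x n)) (n : ℕ) :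
    ‖x (n + 2) - x (n + 1)‖ ≤
      (1 - (1 - ρ) * α (n + 1)) * ‖x (n + 1) - x n‖ + (α n * d - α (n + 1) * d) := by
  have hmem : ∀ k, α k • Φ (x k) + (1 - α k) • x k ∈ C := fun k =>
    hconv (hΦ _ (hxC k)) (hxC k) (hα k).1.le (sub_nonneg.mpr (hα k).2.le) (add_sub_cancel _ _)
  have hdiff : (α (n + 1) • Φ (x (n + 1)) + (1 - α (n + 1)) • x (n + 1))
      - (α n • Φ (x n) + (1 - α n) • x n)
      = α (n + 1) • (Φ (x (n + 1)) - Φ (x n)) + (1 - α (n + 1)) • (x (n + 1) - x n)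
        + (α n - α (n + 1)) • (x n - Φ (x n)) := by module
  have h₁ : ‖α (n + 1) • (Φ (x (n + 1)) - Φ (x n))‖ ≤ α (n + 1) * (ρ * ‖x (n + 1) - x n‖) := by
    rw [norm_smul, Real.norm_of_nonneg (hα _).1.le]
    exact mul_le_mul_of_nonneg_left (hΦc _ (hxC _) _ (hxC n)) (hα _).1.le
  have h₂ : ‖(1 - α (n + 1)) • (x (n + 1) - x n)‖ = (1 - α (n + 1)) * ‖x (n + 1) - x n‖ := by
    rw [norm_smul, Real.norm_of_nonneg (sub_nonneg.mpr (hα _).2.le)]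
  have h₃ : ‖(α n - α (n + 1)) • (x n - Φ (x n))‖ ≤ (α n - α (n + 1)) * d := by
    rw [norm_smul, Real.norm_of_nonneg (sub_nonneg.mpr (hdec n.le_succ))]
    exact mul_le_mul_of_nonneg_left (hd _ (hxC n) _ (hΦ _ (hxC n)))
      (sub_nonneg.mpr (hdec n.le_succ))
  calc ‖x (n + 2) - x (n + 1)‖ ≤ ‖(α (n + 1) • Φ (x (n + 1)) + (1 - α (n + 1)) • x (n + 1))
        - (α n • Φ (x n) + (1 - α n) • x n)‖ := by
        simpa only [← hrec] using hTne _ (hmem (n + 1)) _ (hmem n)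
    _ ≤ α (n + 1) * (ρ * ‖x (n + 1) - x n‖) + (1 - α (n + 1)) * ‖x (n + 1) - x n‖
        + (α n - α (n + 1)) * d := by
        rw [hdiff]; exact (norm_add₃_le ..).trans (by linarith)
    _ = _ := by ring

theorem norm_sub_apply_le (hconv : Convex ℝ C) (hd : ∀ a ∈ C, ∀ b ∈ C, ‖a - b‖ ≤ d)
    (hΦ : ∀ x ∈ C, Φ x ∈ C) (hTne : ∀ x ∈ C, ∀ y ∈ C, ‖T x - T y‖ ≤ ‖x - y‖)
    (hα : ∀ n, α n ∈ Set.Ioo (0 : ℝ) 1) (hxC : ∀ n, x n ∈ C)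
    (hrec : ∀ n, x (n + 1) = T (α n • Φ (x n) + (1 - α n) • x n)) (n : ℕ) :
    ‖x n - T (x n)‖ ≤ ‖x (n + 1) - x n‖ + α n * d := by
  have hmem : α n • Φ (x n) + (1 - α n) • x n ∈ C :=
    hconv (hΦ _ (hxC n)) (hxC n) (hα n).1.le (sub_nonneg.mpr (hα n).2.le) (add_sub_cancel _ _)
  have hstep : ‖x (n + 1) - T (x n)‖ ≤ α n * d :=
    calc ‖x (n + 1) - T (x n)‖ ≤ ‖(α n • Φ (x n) + (1 - α n) • x n) - x n‖ := by
          rw [hrec n]; exact hTne _ hmem _ (hxC n)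
      _ = α n * ‖Φ (x n) - x n‖ := by
          rw [← norm_smul_of_nonneg (hα n).1.le]; congr 1; module
      _ ≤ α n * d := mul_le_mul_of_nonneg_left (hd _ (hΦ _ (hxC n)) _ (hxC n)) (hα n).1.le
  calc ‖x n - T (x n)‖ ≤ ‖x n - x (n + 1)‖ + ‖x (n + 1) - T (x n)‖ :=
        norm_sub_le_norm_sub_add_norm_sub ..
    _ ≤ ‖x (n + 1) - x n‖ + α n * d := by rw [norm_sub_rev]; gcongr

theorem norm_sub_apply_le_exp (hconv : Convex ℝ C) (hd : ∀ a ∈ C, ∀ b ∈ C, ‖a - b‖ ≤ d)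
    (hΦ : ∀ x ∈ C, Φ x ∈ C) (hTne : ∀ x ∈ C, ∀ y ∈ C, ‖T x - T y‖ ≤ ‖x - y‖)
    (hρ : ρ ∈ Set.Icc (0 : ℝ) 1) (hΦc : ∀ x ∈ C, ∀ y ∈ C, ‖Φ x - Φ y‖ ≤ ρ * ‖x - y‖)
    (hα : ∀ n, α n ∈ Set.Ioo (0 : ℝ) 1) (hdec : Antitone α) (hxC : ∀ n, x n ∈ C)
    (hrec : ∀ n, x (n + 1) = T (α n • Φ (x n) + (1 - α n) • x n)) {N n : ℕ} (hNn : N ≤ n) :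
    ‖x n - T (x n)‖ ≤ Real.exp (-((1 - ρ) * ∑ k ∈ Ioc N n, α k)) * d + α N * d := by
  have hd₀ : 0 ≤ d := (norm_nonneg _).trans (hd _ (hxC 0) _ (hxC 0))
  have hcoef : ∀ k, (1 - ρ) * α k ≤ 1 := fun k =>
    mul_le_one₀ (by linarith [hρ.1]) (hα k).1.le (hα k).2.le
  have hunroll := le_prod_mul_add_of_le_mul_add (s := fun k => ‖x (k + 1) - x k‖)
    (fun k => sub_nonneg.mpr (hcoef k))
    (fun k => sub_le_self _ (mul_nonneg (sub_nonneg.mpr hρ.2) (hα k).1.le))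
    (fun _ _ h => mul_le_mul_of_nonneg_right (hdec h) hd₀)
    (norm_iterate_succ_sub_le hconv hd hΦ hTne hΦc hα hdec hxC hrec) hNn
  have hprod : ∏ k ∈ Ioc N n, (1 - (1 - ρ) * α k) ≤
      Real.exp (-((1 - ρ) * ∑ k ∈ Ioc N n, α k)) := by
    rw [mul_sum]; exact prod_one_sub_le_exp_neg_sum _ fun k _ => hcoef k
  have hfirst : (∏ k ∈ Ioc N n, (1 - (1 - ρ) * α k)) * ‖x (N + 1) - x N‖ ≤
      Real.exp (-((1 - ρ) * ∑ k ∈ Ioc N n, α k)) * d :=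
    mul_le_mul hprod (hd _ (hxC _) _ (hxC N)) (norm_nonneg _) (Real.exp_pos _).le
  linarith [norm_sub_apply_le hconv hd hΦ hTne hα hxC hrec n]

end Iteration

theorem stmt_14_general
    {X : Type*} [NormedAddCommGroup X] [NormedSpace ℝ X]
    (C : Set X) (hconv : Convex ℝ C)
    (hbdd : Bornology.IsBounded C) (hdC : 0 < Metric.diam C)
    (T Φ : X → X) (hΦ : ∀ x ∈ C, Φ x ∈ C)
    (hTne : ∀ x ∈ C, ∀ y ∈ C, ‖T x - T y‖ ≤ ‖x - y‖)
    (ρ : ℝ) (hρ : ρ ∈ Set.Ioo (0 : ℝ) 1)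
    (hΦc : ∀ x ∈ C, ∀ y ∈ C, ‖Φ x - Φ y‖ ≤ ρ * ‖x - y‖)
    (α : ℕ → ℝ) (hα : ∀ n, α n ∈ Set.Ioo (0 : ℝ) 1)
    (hdec : Antitone α)
    (φ : ℝ → ℕ) (hφ : ∀ e : ℝ, 0 < e → ∀ n ≥ φ e, |α n| < e)
    (θ : ℕ → ℕ) (hθ : ∀ n : ℕ, (n : ℝ) ≤ ∑ i ∈ Finset.range (θ n + 1), α i)
    (x : ℕ → X) (hxC : ∀ n, x n ∈ C)
    (hrec : ∀ n, x (n + 1) = T (α n • Φ (x n) + (1 - α n) • x n)) :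
    Tendsto (fun n => ‖x n - T (x n)‖) atTop (nhds 0) ∧
      ∀ e ∈ Set.Ioo (0 : ℝ) 2,
        ∀ n ≥ max
          (1 + θ (⌈1 / (1 - ρ)⌉₊ *
            (φ (e / (4 * ((2 + ρ) * Metric.diam C))) + 2 +
              ⌈Real.log (4 * Metric.diam C / e)⌉₊)))
          (1 + φ (e / (2 * ((2 + ρ) * Metric.diam C)))),
        ‖x n - T (x n)‖ < e := by
  set d := Metric.diam C
  have hd : ∀ a ∈ C, ∀ b ∈ C, ‖a - b‖ ≤ d := fun a ha b hb =>
    dist_eq_norm a b ▸ Metric.dist_le_diam_of_mem hbdd ha hb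
  have hrate : ∀ e ∈ Set.Ioo (0 : ℝ) 2, ∀ n ≥ max
      (1 + θ (⌈1 / (1 - ρ)⌉₊ * (φ (e / (4 * ((2 + ρ) * d))) + 2 + ⌈Real.log (4 * d / e)⌉₊)))
      (1 + φ (e / (2 * ((2 + ρ) * d)))), ‖x n - T (x n)‖ < e := by
    rintro e ⟨he, -⟩ n hn
    have hP : 0 < (2 + ρ) * d := mul_pos (by linarith [hρ.1]) hdC
    set N := φ (e / (4 * ((2 + ρ) * d)))
    have hθn := (le_max_left _ _).trans hn
    obtain ⟨hNn, hK⟩ := lt_and_natCast_le_mul_sum_Ioc_of_rate (fun i => (hα i).1.le)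
      (fun i => (hα i).2.le) hθ (sub_pos.mpr hρ.2) N ⌈Real.log (4 * d / e)⌉₊ (n := n) (by omega)
    have hexp := Real.exp_neg_natCeil_log_le (by positivity : 0 < 4 * d / e)
    have hαN : α N < e / (4 * ((2 + ρ) * d)) := by
      simpa [abs_of_pos (hα N).1] using hφ _ (by positivity) N le_rfl
    calc ‖x n - T (x n)‖ ≤ Real.exp (-((1 - ρ) * ∑ k ∈ Ioc N n, α k)) * d + α N * d :=
          norm_sub_apply_le_exp hconv hd hΦ hTne (Set.Ioo_subset_Icc_self hρ) hΦc hα hdec hxC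
            hrec hNn.le
      _ ≤ (4 * d / e)⁻¹ * d + e / (4 * ((2 + ρ) * d)) * d := by
          gcongr
          exact (Real.exp_le_exp.mpr (neg_le_neg hK)).trans hexp
      _ = e / 4 + e / (4 * (2 + ρ)) := by field_simp
      _ < e := by
          have : e / (4 * (2 + ρ)) < e / 4 := by gcongr; linarith [hρ.1]
          linarith
  refine ⟨tendsto_order.2 ⟨fun a ha => .of_forall fun n => ha.trans_le (norm_nonneg _),
    fun e he => ?_⟩, hrate⟩
  have he' : min e 1 ∈ Set.Ioo (0 : ℝ) 2 :=
    ⟨lt_min he one_pos, (min_le_right e 1).trans_lt one_lt_two⟩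
  exact eventually_atTop.2 ⟨_, fun n hn => (hrate _ he' n hn).trans_le (min_le_left e 1)⟩

theorem stmt_14
    {X : Type*} [NormedAddCommGroup X] [NormedSpace ℝ X]
    (C : Set X) (hC : C.Nonempty) (hconv : Convex ℝ C)
    (hbdd : Bornology.IsBounded C) (hdC : 0 < Metric.diam C)
    (T Φ : X → X) (hT : ∀ x ∈ C, T x ∈ C) (hΦ : ∀ x ∈ C, Φ x ∈ C)
    (hTne : ∀ x ∈ C, ∀ y ∈ C, ‖T x - T y‖ ≤ ‖x - y‖)
    (ρ : ℝ) (hρ : ρ ∈ Set.Ioo (0 : ℝ) 1)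
    (hΦc : ∀ x ∈ C, ∀ y ∈ C, ‖Φ x - Φ y‖ ≤ ρ * ‖x - y‖)
    (α : ℕ → ℝ) (hα : ∀ n, α n ∈ Set.Ioo (0 : ℝ) 1)
    (hdec : Antitone α)
    (φ : ℝ → ℕ) (hφ : ∀ e : ℝ, 0 < e → ∀ n ≥ φ e, |α n| < e)
    (θ : ℕ → ℕ) (hθ : ∀ n : ℕ, (n : ℝ) ≤ ∑ i ∈ Finset.range (θ n + 1), α i)
    (x : ℕ → X) (hx0 : x 0 ∈ C) (hxC : ∀ n, x n ∈ C)
    (hrec : ∀ n, x (n + 1) = T (α n • Φ (x n) + (1 - α n) • x n)) :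
    Tendsto (fun n => ‖x n - T (x n)‖) atTop (nhds 0) ∧
      ∀ e ∈ Set.Ioo (0 : ℝ) 2,
        ∀ n ≥ max
          (1 + θ (⌈1 / (1 - ρ)⌉₊ *
            (φ (e / (4 * ((2 + ρ) * Metric.diam C))) + 2 +
              ⌈Real.log (4 * Metric.diam C / e)⌉₊)))
          (1 + φ (e / (2 * ((2 + ρ) * Metric.diam C)))),
        ‖x n - T (x n)‖ < e :=
  stmt_14_general C hconv hbdd hdC T Φ hΦ hTne ρ hρ hΦc α hα hdec φ hφ θ hθ x hxC hrec
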